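/- Let U₁ be a unitary d₁×d₁ matrix and U₂ a unitary d₂×d₂ matrix, with c₁ = max_{k,i} |(U₁)_{ki}| and c₂ = max_{k,i} |(U₂)_{ki}|. Let (α, β) be a dual pair (α, β ∈ [1/2, ∞], 1/α + 1/β = 2), and suppose unit vectors ψ₁ ∈ ℂ^{d₁} and ψ₂ ∈ ℂ^{d₂} satisfy H_α(p^{ψ₁}) + H_β(q^{ψ₁}) = -log(c₁²) (with respect to U₁) and H_α(p^{ψ₂}) + H_β(q^{ψ₂}) = -log(c₂²) (with respect to U₂). Then the unit vector ψ ∈ ℂ^{d₁·d₂} with ψ(i,j) = ψ₁(i)·ψ₂(j) satisfies H_α(p^ψ) + H_β(q^ψ) = -log((c₁·c₂)²) with respect to the Kronecker product U₁ ⊗ U₂, whose maximal entry modulus is c₁·c₂. -/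

import Mathlib

/-!
Rényi entropies of every order are additive on product distributions: the maximum, the Shannon
sum and the power sum `∑ pᵢ^α` all factor over `p ⊗ q`. The product state has product outcome
distributions for both measurements, since `U₁ ⊗ U₂` acts factorwise on `ψ₁ ⊗ ψ₂`, and the largest
entry modulus of `U₁ ⊗ U₂` is `c₁ c₂`, so both sides of the two equalities simply add up; the
logarithm splits because a unitary matrix has a nonzero entry.
-/

open Matrix
open scoped ENNReal Kronecker

/-- Rényi entropy with parameter `α ∈ [0, ∞]` of a probability vector `p`
(natural logarithm): `H_∞(p) = -log max_j p(j)`, `H_1(p) = -∑ p log p`,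
and otherwise `H_α(p) = (1-α)⁻¹ log ∑_j p(j)^α`. -/
noncomputable def renyiEntropy {ι : Type} [Fintype ι] (α : ℝ≥0∞) (p : ι → ℝ) : ℝ :=
  if α = ⊤ then - Real.log (sSup (Set.range p))
  else if α = 1 then - ∑ j, p j * Real.log (p j)
  else (1 - α.toReal)⁻¹ * Real.log (∑ j, p j ^ α.toReal)

open Finset

lemma sum_prod_mul {ι κ R : Type*} [Fintype ι] [Fintype κ] [CommSemiring R]
    (f : ι → R) (g : κ → R) :
    ∑ x : ι × κ, f x.1 * g x.2 = (∑ i, f i) * ∑ j, g j := by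
  rw [Fintype.sum_mul_sum, Fintype.sum_prod_type]

lemma isGreatest_range_mul {ι κ : Type*} {f : ι → ℝ} {g : κ → ℝ} {a b : ℝ}
    (hf : ∀ i, 0 ≤ f i) (hg : ∀ j, 0 ≤ g j)
    (ha : IsGreatest (Set.range f) a) (hb : IsGreatest (Set.range g) b) :
    IsGreatest (Set.range fun x : ι × κ => f x.1 * g x.2) (a * b) := by
  obtain ⟨⟨i₀, rfl⟩, hi₀⟩ := ha
  obtain ⟨⟨j₀, rfl⟩, hj₀⟩ := hb
  refine ⟨⟨(i₀, j₀), rfl⟩, ?_⟩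
  rintro _ ⟨⟨i, j⟩, rfl⟩
  exact mul_le_mul (hi₀ ⟨i, rfl⟩) (hj₀ ⟨j, rfl⟩) (hg j) (hf i₀)

section RenyiEntropy

variable {ι κ : Type} [Fintype ι] [Fintype κ] {p : ι → ℝ} {q : κ → ℝ}

lemma exists_pos_of_sum_eq_one (hp : ∑ i, p i = 1) : ∃ i, 0 < p i := by
  simpa using exists_lt_of_sum_lt (s := univ) (f := 0) (g := p) (by simp [hp])

lemma exists_pos_isGreatest_range_of_sum_eq_one (hp : ∑ i, p i = 1) :
    ∃ a, 0 < a ∧ IsGreatest (Set.range p) a := by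
  obtain ⟨i₁, hi₁⟩ := exists_pos_of_sum_eq_one hp
  have : Nonempty ι := ⟨i₁⟩
  obtain ⟨i₀, hi₀⟩ := Finite.exists_max p
  exact ⟨p i₀, hi₁.trans_le (hi₀ i₁), ⟨i₀, rfl⟩, by rintro _ ⟨i, rfl⟩; exact hi₀ i⟩

lemma sum_rpow_pos_of_sum_eq_one (t : ℝ) (hp : ∀ i, 0 ≤ p i) (hps : ∑ i, p i = 1) :
    0 < ∑ i, p i ^ t := by
  obtain ⟨i, hi⟩ := exists_pos_of_sum_eq_one hps
  exact sum_pos' (fun i _ => Real.rpow_nonneg (hp i) _) ⟨i, mem_univ _, Real.rpow_pos_of_pos hi _⟩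

lemma renyiEntropy_top_prod (hp : ∀ i, 0 ≤ p i) (hq : ∀ j, 0 ≤ q j)
    (hps : ∑ i, p i = 1) (hqs : ∑ j, q j = 1) :
    renyiEntropy ⊤ (fun x : ι × κ => p x.1 * q x.2) = renyiEntropy ⊤ p + renyiEntropy ⊤ q := by
  obtain ⟨a, ha, hpa⟩ := exists_pos_isGreatest_range_of_sum_eq_one hps
  obtain ⟨b, hb, hqb⟩ := exists_pos_isGreatest_range_of_sum_eq_one hqs
  simp only [renyiEntropy, if_true, hpa.csSup_eq, hqb.csSup_eq,
    (isGreatest_range_mul hp hq hpa hqb).csSup_eq, Real.log_mul ha.ne' hb.ne']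
  ring

lemma renyiEntropy_one_prod (hps : ∑ i, p i = 1) (hqs : ∑ j, q j = 1) :
    renyiEntropy 1 (fun x : ι × κ => p x.1 * q x.2) = renyiEntropy 1 p + renyiEntropy 1 q := by
  have mul_log_mul (x y : ℝ) :
      x * y * Real.log (x * y) = x * Real.log x * y + x * (y * Real.log y) := by
    have := Real.negMulLog_mul x y
    simp only [Real.negMulLog] at this
    linarith
  simp only [renyiEntropy, ENNReal.one_ne_top, if_false, if_true, mul_log_mul, sum_add_distrib]
  rw [sum_prod_mul (fun i => p i * Real.log (p i)) q, sum_prod_mul p fun j => q j * Real.log (q j),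
    hps, hqs]
  ring

lemma renyiEntropy_prod_of_ne (α : ℝ≥0∞) (hα_top : α ≠ ⊤) (hα_one : α ≠ 1)
    (hp : ∀ i, 0 ≤ p i) (hq : ∀ j, 0 ≤ q j) (hps : ∑ i, p i = 1) (hqs : ∑ j, q j = 1) :
    renyiEntropy α (fun x : ι × κ => p x.1 * q x.2) = renyiEntropy α p + renyiEntropy α q := by
  simp only [renyiEntropy, if_neg hα_top, if_neg hα_one]
  rw [← mul_add, ← Real.log_mul (sum_rpow_pos_of_sum_eq_one _ hp hps).ne'
    (sum_rpow_pos_of_sum_eq_one _ hq hqs).ne', ← sum_prod_mul]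
  simp only [Real.mul_rpow (hp _) (hq _)]

lemma renyiEntropy_prod (α : ℝ≥0∞) (hp : ∀ i, 0 ≤ p i) (hq : ∀ j, 0 ≤ q j)
    (hps : ∑ i, p i = 1) (hqs : ∑ j, q j = 1) :
    renyiEntropy α (fun x : ι × κ => p x.1 * q x.2) = renyiEntropy α p + renyiEntropy α q := by
  rcases eq_or_ne α ⊤ with rfl | hα_top
  · exact renyiEntropy_top_prod hp hq hps hqs
  rcases eq_or_ne α 1 with rfl | hα_one
  · exact renyiEntropy_one_prod hps hqs
  exact renyiEntropy_prod_of_ne α hα_top hα_one hp hq hps hqs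

end RenyiEntropy

section Unitary

variable {𝕜 n : Type*} [RCLike 𝕜] [Fintype n] [DecidableEq n] {U : Matrix n n 𝕜}

lemma sum_norm_sq_mulVec_of_mem_unitaryGroup (hU : U ∈ unitaryGroup n 𝕜) (ψ : n → 𝕜) :
    ∑ k, ‖(U *ᵥ ψ) k‖ ^ 2 = ∑ i, ‖ψ i‖ ^ 2 := by
  have star_dotProduct_self (w : n → 𝕜) : star w ⬝ᵥ w = ((∑ k, ‖w k‖ ^ 2 : ℝ) : 𝕜) := by
    simp only [dotProduct, Pi.star_apply, RCLike.star_def, RCLike.ofReal_sum, RCLike.ofReal_pow,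
      RCLike.conj_mul]
  have h : star (U *ᵥ ψ) ⬝ᵥ (U *ᵥ ψ) = star ψ ⬝ᵥ ψ := by
    rw [star_mulVec, dotProduct_mulVec, vecMul_vecMul, ← star_eq_conjTranspose,
      Unitary.star_mul_self_of_mem hU, vecMul_one]
  rw [star_dotProduct_self, star_dotProduct_self] at h
  exact_mod_cast h

lemma pos_of_isGreatest_norm_entry_of_mem_unitaryGroup (hU : U ∈ unitaryGroup n 𝕜) {c : ℝ}
    (hc : IsGreatest (Set.range fun ki : n × n => ‖U ki.1 ki.2‖) c) : 0 < c := by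
  obtain ⟨⟨k, i⟩, -⟩ := hc.1
  have : Nonempty n := ⟨k⟩
  by_contra! hc_nonpos
  have hU_zero : U = 0 := by
    ext k i
    exact norm_le_zero_iff.mp ((hc.2 ⟨(k, i), rfl⟩).trans hc_nonpos)
  have := Unitary.star_mul_self_of_mem hU
  rw [hU_zero, mul_zero] at this
  exact zero_ne_one this

end Unitary

section Kronecker

variable {m n p q : Type*}

lemma kronecker_mulVec_mul {R : Type*} [CommSemiring R] [Fintype n] [Fintype q]
    (A : Matrix m n R) (B : Matrix p q R) (v : n → R) (w : q → R) :
    (A ⊗ₖ B) *ᵥ (fun x => v x.1 * w x.2) = fun y => (A *ᵥ v) y.1 * (B *ᵥ w) y.2 := by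
  ext y
  simp only [mulVec, dotProduct, kroneckerMap_apply, ← sum_prod_mul]
  exact sum_congr rfl fun x _ => by ring

lemma isGreatest_norm_kronecker {R : Type*} [NormedRing R] [NormMulClass R]
    {A : Matrix m n R} {B : Matrix p q R} {a b : ℝ}
    (ha : IsGreatest (Set.range fun x : m × n => ‖A x.1 x.2‖) a)
    (hb : IsGreatest (Set.range fun x : p × q => ‖B x.1 x.2‖) b) :
    IsGreatest (Set.range fun x : (m × p) × (n × q) => ‖(A ⊗ₖ B) x.1 x.2‖) (a * b) := by
  rw [← (Equiv.prodProdProdComm m n p q).surjective.range_comp]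
  simpa [Function.comp_def, norm_mul] using
    isGreatest_range_mul (fun _ => norm_nonneg _) (fun _ => norm_nonneg _) ha hb

end Kronecker

theorem tensor_of_equality_states_general (d₁ d₂ : ℕ)
    (U₁ : Matrix (Fin d₁) (Fin d₁) ℂ) (hU₁ : U₁ ∈ Matrix.unitaryGroup (Fin d₁) ℂ)
    (U₂ : Matrix (Fin d₂) (Fin d₂) ℂ) (hU₂ : U₂ ∈ Matrix.unitaryGroup (Fin d₂) ℂ)
    (c₁ c₂ : ℝ)
    (hc₁ : IsGreatest (Set.range fun ki : Fin d₁ × Fin d₁ => ‖U₁ ki.1 ki.2‖) c₁)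
    (hc₂ : IsGreatest (Set.range fun ki : Fin d₂ × Fin d₂ => ‖U₂ ki.1 ki.2‖) c₂)
    (α β : ℝ≥0∞)
    (ψ₁ : Fin d₁ → ℂ) (hψ₁ : ∑ i, ‖ψ₁ i‖ ^ 2 = 1)
    (ψ₂ : Fin d₂ → ℂ) (hψ₂ : ∑ j, ‖ψ₂ j‖ ^ 2 = 1)
    (heq₁ : renyiEntropy α (fun i => ‖ψ₁ i‖ ^ 2) +
        renyiEntropy β (fun k => ‖U₁.mulVec ψ₁ k‖ ^ 2) = - Real.log (c₁ ^ 2))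
    (heq₂ : renyiEntropy α (fun j => ‖ψ₂ j‖ ^ 2) +
        renyiEntropy β (fun l => ‖U₂.mulVec ψ₂ l‖ ^ 2) = - Real.log (c₂ ^ 2)) :
    (∑ x : Fin d₁ × Fin d₂, ‖ψ₁ x.1 * ψ₂ x.2‖ ^ 2 = 1) ∧
    IsGreatest (Set.range fun x : (Fin d₁ × Fin d₂) × (Fin d₁ × Fin d₂) =>
        ‖(U₁ ⊗ₖ U₂) x.1 x.2‖) (c₁ * c₂) ∧
    renyiEntropy α (fun x : Fin d₁ × Fin d₂ => ‖ψ₁ x.1 * ψ₂ x.2‖ ^ 2) +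
      renyiEntropy β (fun y : Fin d₁ × Fin d₂ =>
        ‖(U₁ ⊗ₖ U₂).mulVec (fun x => ψ₁ x.1 * ψ₂ x.2) y‖ ^ 2)
      = - Real.log ((c₁ * c₂) ^ 2) := by
  have hUψ₁ := (sum_norm_sq_mulVec_of_mem_unitaryGroup hU₁ ψ₁).trans hψ₁
  have hUψ₂ := (sum_norm_sq_mulVec_of_mem_unitaryGroup hU₂ ψ₂).trans hψ₂
  have hc₁_pos := pos_of_isGreatest_norm_entry_of_mem_unitaryGroup hU₁ hc₁
  have hc₂_pos := pos_of_isGreatest_norm_entry_of_mem_unitaryGroup hU₂ hc₂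
  simp only [kronecker_mulVec_mul, norm_mul, mul_pow]
  refine ⟨?_, isGreatest_norm_kronecker hc₁ hc₂, ?_⟩
  · rw [sum_prod_mul (fun i => ‖ψ₁ i‖ ^ 2) fun j => ‖ψ₂ j‖ ^ 2, hψ₁, hψ₂, one_mul]
  rw [renyiEntropy_prod α (fun _ => by positivity) (fun _ => by positivity) hψ₁ hψ₂,
    renyiEntropy_prod β (fun _ => by positivity) (fun _ => by positivity) hUψ₁ hUψ₂,
    Real.log_mul (by positivity) (by positivity)]
  linarith

/-- Tensor products of Maassen–Uffink equality states are equality states for the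
Kronecker product of the unitaries, whose maximal entry modulus is `c₁·c₂`. -/
theorem tensor_of_equality_states (d₁ d₂ : ℕ) (h₁ : 1 ≤ d₁) (h₂ : 1 ≤ d₂)
    (U₁ : Matrix (Fin d₁) (Fin d₁) ℂ) (hU₁ : U₁ ∈ Matrix.unitaryGroup (Fin d₁) ℂ)
    (U₂ : Matrix (Fin d₂) (Fin d₂) ℂ) (hU₂ : U₂ ∈ Matrix.unitaryGroup (Fin d₂) ℂ)
    (c₁ c₂ : ℝ)
    (hc₁ : IsGreatest (Set.range fun ki : Fin d₁ × Fin d₁ => ‖U₁ ki.1 ki.2‖) c₁)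
    (hc₂ : IsGreatest (Set.range fun ki : Fin d₂ × Fin d₂ => ‖U₂ ki.1 ki.2‖) c₂)
    (α β : ℝ≥0∞) (hα : (2 : ℝ≥0∞)⁻¹ ≤ α) (hβ : (2 : ℝ≥0∞)⁻¹ ≤ β)
    (hdual : 1 / α + 1 / β = 2)
    (ψ₁ : Fin d₁ → ℂ) (hψ₁ : ∑ i, ‖ψ₁ i‖ ^ 2 = 1)
    (ψ₂ : Fin d₂ → ℂ) (hψ₂ : ∑ j, ‖ψ₂ j‖ ^ 2 = 1)
    (heq₁ : renyiEntropy α (fun i => ‖ψ₁ i‖ ^ 2) +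
        renyiEntropy β (fun k => ‖U₁.mulVec ψ₁ k‖ ^ 2) = - Real.log (c₁ ^ 2))
    (heq₂ : renyiEntropy α (fun j => ‖ψ₂ j‖ ^ 2) +
        renyiEntropy β (fun l => ‖U₂.mulVec ψ₂ l‖ ^ 2) = - Real.log (c₂ ^ 2)) :
    (∑ x : Fin d₁ × Fin d₂, ‖ψ₁ x.1 * ψ₂ x.2‖ ^ 2 = 1) ∧
    IsGreatest (Set.range fun x : (Fin d₁ × Fin d₂) × (Fin d₁ × Fin d₂) =>
        ‖(U₁ ⊗ₖ U₂) x.1 x.2‖) (c₁ * c₂) ∧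
    renyiEntropy α (fun x : Fin d₁ × Fin d₂ => ‖ψ₁ x.1 * ψ₂ x.2‖ ^ 2) +
      renyiEntropy β (fun y : Fin d₁ × Fin d₂ =>
        ‖(U₁ ⊗ₖ U₂).mulVec (fun x => ψ₁ x.1 * ψ₂ x.2) y‖ ^ 2)
      = - Real.log ((c₁ * c₂) ^ 2) :=
  tensor_of_equality_states_general d₁ d₂ U₁ hU₁ U₂ hU₂ c₁ c₂ hc₁ hc₂ α β ψ₁ hψ₁ ψ₂ hψ₂ heq₁ heq₂
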